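/- The Thue-Morse sequence u is overlap-free: u contains no factor of the form a w a w a, where a is a single letter and w is a (possibly empty) finite word. -/

import Mathlib

open Fin.NatCast

def tm (n : ℕ) : Fin 2 := ((Nat.digits 2 n).count 1 : Fin 2)

/-! Halving a factor of even period `2q` gives a factor of period `q` (`tm (2n + r) = tm n + r`),
so it suffices to exclude odd periods. For odd `p`, of the two positions `n` and `n + p` one is
even, and `tm` changes between an even position and its successor; hence `tm` changes at every
step of the overlap, and after the odd number `p` of steps it cannot return to its first letter. -/

/-- The factor `x i ⋯ x (i + 2p)` is an overlap `a w a w a` with `|a w| = p`. -/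
def IsOverlap {α : Type*} (x : ℕ → α) (i p : ℕ) : Prop :=
  ∀ k ≤ p, x (i + k) = x (i + p + k)

section OddPeriod

variable {x : ℕ → Fin 2} {i p : ℕ}

theorem IsOverlap.apply_succ_of_odd (hx : ∀ n, x (2 * n + 1) = x (2 * n) + 1)
    (h : IsOverlap x i p) (hp : Odd p) {k : ℕ} (hk : k < p) : x (i + k + 1) = x (i + k) + 1 := by
  rcases Nat.even_or_odd' (i + k) with ⟨n, hn | hn⟩
  · rw [hn, hx]
  · have hn' : i + p + k = 2 * (n + (p + 1) / 2) := by obtain ⟨q, rfl⟩ := hp; omega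
    calc x (i + k + 1) = x (i + p + (k + 1)) := h (k + 1) hk
      _ = x (i + p + k) + 1 := by rw [← add_assoc, hn', hx]
      _ = x (i + k) + 1 := by rw [h k hk.le]

theorem IsOverlap.not_odd (hx : ∀ n, x (2 * n + 1) = x (2 * n) + 1) (h : IsOverlap x i p) :
    ¬ Odd p := by
  intro hp
  have walk : ∀ k ≤ p, x (i + k) = x i + k := by
    intro k hk
    induction k with
    | zero => simp
    | succ k ih =>
      rw [← add_assoc, h.apply_succ_of_odd hx hp (by omega), ih (by omega), Nat.cast_succ,
        add_assoc]
  have hp1 : ((p : ℕ) : Fin 2) = 1 := by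
    obtain ⟨q, rfl⟩ := hp
    push_cast
    simp
  have h0 := h 0 (Nat.zero_le p)
  rw [add_zero, add_zero, walk p le_rfl, hp1] at h0
  simp at h0

end OddPeriod

theorem tm_two_mul (n : ℕ) : tm (2 * n) = tm n := by
  rcases Nat.eq_zero_or_pos n with rfl | hn
  · rfl
  · rw [tm, Nat.digits_def' one_lt_two (by omega)]
    simp [tm]

theorem tm_two_mul_add_one (n : ℕ) : tm (2 * n + 1) = tm n + 1 := by
  rw [tm, Nat.digits_def' one_lt_two (by omega), Nat.mul_add_mod_self_left,
    Nat.mul_add_div two_pos]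
  simp [tm]

theorem IsOverlap.tm_half {i q : ℕ} (h : IsOverlap tm i (2 * q)) : IsOverlap tm (i / 2) q := by
  intro k hk
  have hk2 := h (2 * k) (by omega)
  rcases Nat.even_or_odd' i with ⟨j, rfl | rfl⟩
  · rw [show 2 * j / 2 = j by omega]
    rwa [show 2 * j + 2 * k = 2 * (j + k) by ring,
      show 2 * j + 2 * q + 2 * k = 2 * (j + q + k) by ring, tm_two_mul, tm_two_mul] at hk2
  · rw [show (2 * j + 1) / 2 = j by omega]
    rwa [show 2 * j + 1 + 2 * k = 2 * (j + k) + 1 by ring,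
      show 2 * j + 1 + 2 * q + 2 * k = 2 * (j + q + k) + 1 by ring, tm_two_mul_add_one,
      tm_two_mul_add_one, add_left_inj] at hk2

theorem not_isOverlap_tm {p : ℕ} (hp : 1 ≤ p) (i : ℕ) : ¬ IsOverlap tm i p := by
  induction p using Nat.strong_induction_on generalizing i with
  | _ p ih =>
  intro h
  rcases Nat.even_or_odd' p with ⟨q, rfl | rfl⟩
  · exact ih q (by omega) (by omega) (i / 2) h.tm_half
  · exact h.not_odd (fun n => by rw [tm_two_mul_add_one, tm_two_mul]) (odd_two_mul_add_one q)

/-- The Thue-Morse sequence is overlap-free: it contains no factor of the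
form `a w a w a`, i.e. no factor of length `2p+1` with period `p ≥ 1`. -/
theorem thue_morse_overlap_free :
    ¬ ∃ (i p : ℕ), 1 ≤ p ∧ ∀ k ≤ p, tm (i + k) = tm (i + p + k) := by
  rintro ⟨i, p, hp, h⟩
  exact not_isOverlap_tm hp i h
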